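/- Let 0 < a ≤ 1 and ε > 0. Then for every t ≥ 0, E_{a,1}(−(t/ε)^a) = 1 − ε^{−a} ∫_0^t s^{a−1} E_{a,a}(−(s/ε)^a) ds. -/

import Mathlib

open Real MeasureTheory Set Filter

/-- The generalized Mittag-Leffler function `E_{a,b}(x) = ∑ₖ xᵏ / Γ(a k + b)`. -/
noncomputable def mittagLeffler (a b x : ℝ) : ℝ :=
  ∑' k : ℕ, x ^ k / Real.Gamma (a * k + b)


lemma gamma_lower_bound {M : ℝ} (hM : 1 ≤ M) {y : ℝ} (hy : 2 ≤ y) :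
    M ^ (y - 2) / Real.exp M ≤ Real.Gamma y := by
  have hy0 : 0 ≤ y := by linarith
  have hfl2 : 2 ≤ ⌊y⌋₊ := Nat.le_floor (by exact_mod_cast hy)
  have hfl1 : 1 ≤ ⌊y⌋₊ := by omega
  have h1 : Real.Gamma (⌊y⌋₊ : ℝ) ≤ Real.Gamma y := by
    rcases eq_or_lt_of_le (Nat.floor_le hy0) with h | h
    · rw [h]
    · exact (Real.Gamma_strictMonoOn_Ici (mem_Ici.mpr (by exact_mod_cast hfl2))
        (mem_Ici.mpr hy) h).le
  set n : ℕ := ⌊y⌋₊ - 1 with hn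
  have hfl : (⌊y⌋₊ : ℝ) = (n : ℝ) + 1 := by
    have : ⌊y⌋₊ = n + 1 := by omega
    rw [this]; push_cast; ring
  have h2 : Real.Gamma (⌊y⌋₊ : ℝ) = (n.factorial : ℝ) := by
    rw [hfl, Real.Gamma_nat_eq_factorial]
  have h3 : M ^ n / Real.exp M ≤ (n.factorial : ℝ) := by
    rw [div_le_iff₀ (Real.exp_pos M)]
    have h4 : M ^ n / (n.factorial : ℝ) ≤ Real.exp M := by
      rw [Real.exp_eq_exp_ℝ, NormedSpace.exp_eq_tsum_div]
      exact Summable.le_tsum (Real.summable_pow_div_factorial M) n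
        (fun i _ => by positivity)
    have hnf : (0:ℝ) < n.factorial := by positivity
    calc M ^ n = M ^ n / (n.factorial : ℝ) * (n.factorial : ℝ) := by field_simp
      _ ≤ Real.exp M * (n.factorial : ℝ) :=
          mul_le_mul_of_nonneg_right h4 (by positivity)
      _ = (n.factorial : ℝ) * Real.exp M := by ring
  have h5 : M ^ (y - 2) ≤ M ^ (n : ℝ) := by
    apply Real.rpow_le_rpow_of_exponent_le hM
    have h6 : y - 1 ≤ ⌊y⌋₊ := by
      have := Nat.lt_floor_add_one y; linarith
    have : (n : ℝ) = (⌊y⌋₊ : ℝ) - 1 := by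
      have : ⌊y⌋₊ = n + 1 := by omega
      rw [this]; push_cast; ring
    rw [this]; linarith
  calc M ^ (y - 2) / Real.exp M ≤ M ^ (n : ℝ) / Real.exp M :=
        by gcongr
      _ = M ^ n / Real.exp M := by rw [Real.rpow_natCast]
      _ ≤ (n.factorial : ℝ) := h3
      _ ≤ Real.Gamma y := h2 ▸ h1

lemma summable_ml (a b x : ℝ) (ha : 0 < a) (hb : 0 < b) :
    Summable fun k : ℕ => x ^ k / Real.Gamma (a * k + b) := by
  set M : ℝ := (2 * |x| + 2) ^ (1 / a) with hMdef
  have hx2 : (1:ℝ) ≤ 2 * |x| + 2 := by have := abs_nonneg x; linarith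
  have hM1 : 1 ≤ M := Real.one_le_rpow hx2 (by positivity)
  have hMa : M ^ a = 2 * |x| + 2 := by
    rw [hMdef, ← Real.rpow_mul (by linarith), one_div, inv_mul_cancel₀ ha.ne',
      Real.rpow_one]
  have hM0 : 0 < M := by linarith
  set C : ℝ := Real.exp M * M ^ (2 - b) with hCdef
  have hC0 : 0 < C := by positivity
  have key : ∀ k : ℕ, 2 ≤ a * k + b →
      |x ^ k / Real.Gamma (a * k + b)| ≤ C * (1/2) ^ k := by
    intro k hk
    have hΓpos : 0 < Real.Gamma (a * k + b) := Real.Gamma_pos_of_pos (by linarith)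
    have hlb : M ^ (a * k + b - 2) / Real.exp M ≤ Real.Gamma (a * k + b) :=
      gamma_lower_bound hM1 hk
    have hlb0 : 0 < M ^ (a * k + b - 2) / Real.exp M := by positivity
    rw [abs_div, abs_pow, abs_of_pos hΓpos]
    have step1 : |x| ^ k / Real.Gamma (a * k + b)
        ≤ |x| ^ k / (M ^ (a * k + b - 2) / Real.exp M) := by
      gcongr
    have e1 : M ^ (a * k + b - 2) = (M ^ a) ^ k * M ^ (b - 2) := by
      rw [← Real.rpow_natCast (M ^ a) k, ← Real.rpow_mul hM0.le,
        ← Real.rpow_add hM0]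
      ring_nf
    have hMapow : (0:ℝ) < (M ^ a) ^ k := by positivity
    have hMb2 : (0:ℝ) < M ^ (b - 2) := by positivity
    have e2 : |x| ^ k / (M ^ (a * k + b - 2) / Real.exp M)
        = C * (|x| / (2 * |x| + 2)) ^ k := by
      rw [e1, hCdef, div_pow, hMa]
      have : M ^ (2 - b) = (M ^ (b - 2))⁻¹ := by
        rw [← Real.rpow_neg hM0.le]; ring_nf
      rw [this]
      field_simp
    have hfrac : |x| / (2 * |x| + 2) ≤ 1/2 := by
      rw [div_le_div_iff₀ (by positivity) (by norm_num)]
      have := abs_nonneg x; linarith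
    have step2 : C * (|x| / (2 * |x| + 2)) ^ k ≤ C * (1/2) ^ k :=
      mul_le_mul_of_nonneg_left (pow_le_pow_left₀ (by positivity) hfrac k) hC0.le
    linarith [step1, e2 ▸ step1]
  -- reduce to tail
  set K : ℕ := ⌈2 / a⌉₊ with hK
  rw [← summable_nat_add_iff K]
  apply Summable.of_norm_bounded
    ((summable_geometric_two).mul_left C)
  intro k
  have hK2 : 2 ≤ a * K := by
    have h1 : 2 / a ≤ (K : ℝ) := Nat.le_ceil _
    calc (2:ℝ) = a * (2 / a) := by field_simp
      _ ≤ a * K := by gcongr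
  have hk2 : 2 ≤ a * ((k + K : ℕ) : ℝ) + b := by
    push_cast
    have : a * K ≤ a * (k + K) := by
      have h9 : (K:ℝ) ≤ (k:ℝ) + K := le_add_of_nonneg_left (Nat.cast_nonneg k)
      gcongr
    linarith
  calc ‖x ^ (k + K) / Real.Gamma (a * (k + K : ℕ) + b)‖
      ≤ C * (1/2) ^ (k + K) := key _ hk2
    _ ≤ C * (1/2) ^ k :=
        mul_le_mul_of_nonneg_left
          (pow_le_pow_of_le_one (by norm_num) (by norm_num) (Nat.le_add_right k K)) hC0.le

/-- For `0 < a ≤ 1`, `ε > 0` and `t ≥ 0`: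
`E_{a,1}(−(t/ε)^a) = 1 − ε^{−a} ∫₀ᵗ s^{a−1} E_{a,a}(−(s/ε)^a) ds`. -/
theorem mittagLeffler_one_eq_one_sub_integral (a ε : ℝ) (ha : 0 < a) (ha1 : a ≤ 1)
    (hε : 0 < ε) (t : ℝ) (ht : 0 ≤ t) :
    mittagLeffler a 1 (-((t / ε) ^ a)) =
      1 - ε ^ (-a) * ∫ s in (0 : ℝ)..t, s ^ (a - 1) * mittagLeffler a a (-((s / ε) ^ a)) := by
  -- trivial case t = 0
  rcases eq_or_lt_of_le ht with rfl | ht0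
  · simp only [intervalIntegral.integral_same, mul_zero, sub_zero]
    rw [zero_div, Real.zero_rpow ha.ne', neg_zero]
    unfold mittagLeffler
    rw [tsum_eq_single 0 (fun k hk => by rw [zero_pow hk, zero_div])]
    norm_num [Real.Gamma_one]
  set c : ℝ := ε ^ (-a) with hcdef
  have hc0 : 0 < c := Real.rpow_pos_of_pos hε _
  set d : ℕ → ℝ := fun k => (-c) ^ k / Real.Gamma (a * k + a) with hddef
  have hΓpos : ∀ k : ℕ, 0 < Real.Gamma (a * k + a) := fun k =>
    Real.Gamma_pos_of_pos (by positivity)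
  have hexp : ∀ k : ℕ, (-1:ℝ) < a * k + a - 1 := fun k => by
    have : (0:ℝ) ≤ a * k := by positivity
    linarith
  -- pointwise series expansion of the integrand
  have hpt : ∀ s ∈ Ioc (0:ℝ) t,
      s ^ (a - 1) * mittagLeffler a a (-((s / ε) ^ a))
        = ∑' k : ℕ, d k * s ^ (a * k + a - 1) := by
    intro s hs
    have hs0 : 0 < s := hs.1
    unfold mittagLeffler
    rw [← tsum_mul_left]
    apply tsum_congr
    intro k
    have h1 : (s / ε) ^ a = s ^ a * c := by
      rw [div_eq_mul_inv, Real.mul_rpow hs0.le (by positivity), Real.inv_rpow hε.le,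
        hcdef, Real.rpow_neg hε.le]
    have h2 : (-((s / ε) ^ a)) ^ k = (-c) ^ k * s ^ (a * k) := by
      rw [h1, show -(s ^ a * c) = (-c) * s ^ a by ring, mul_pow,
        ← Real.rpow_natCast (s ^ a) k, ← Real.rpow_mul hs0.le]
    have h3 : s ^ (a * k) * s ^ (a - 1) = s ^ (a * k + a - 1) := by
      rw [← Real.rpow_add hs0]; ring_nf
    rw [h2]
    simp only [hddef]
    rw [← h3]
    ring
  -- integrability of each term
  have hInt : ∀ k : ℕ, IntegrableOn (fun s => d k * s ^ (a * k + a - 1))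
      (Ioc 0 t) volume := by
    intro k
    rw [← intervalIntegrable_iff_integrableOn_Ioc_of_le ht]
    exact (intervalIntegral.intervalIntegrable_rpow' (hexp k)).const_mul (d k)
  -- value of each integral of s ^ r
  have hIoc : ∀ k : ℕ, ∫ s in Ioc (0:ℝ) t, s ^ (a * k + a - 1)
      = t ^ (a * k + a) / (a * k + a) := by
    intro k
    rw [← intervalIntegral.integral_of_le ht, integral_rpow (Or.inl (hexp k))]
    rw [show a * k + a - 1 + 1 = a * k + a by ring,
      Real.zero_rpow (by positivity : (a:ℝ) * k + a ≠ 0)]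
    ring
  -- norm integrals
  have hnorm : ∀ k : ℕ, ∫ s in Ioc (0:ℝ) t, ‖d k * s ^ (a * k + a - 1)‖
      = |d k| * (t ^ (a * k + a) / (a * k + a)) := by
    intro k
    have hcongr : ∀ s ∈ Ioc (0:ℝ) t,
        ‖d k * s ^ (a * k + a - 1)‖ = |d k| * s ^ (a * k + a - 1) := by
      intro s hs
      rw [norm_mul, Real.norm_eq_abs, Real.norm_eq_abs,
        abs_of_pos (Real.rpow_pos_of_pos hs.1 _)]
    rw [setIntegral_congr_fun measurableSet_Ioc hcongr, integral_const_mul, hIoc]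
  -- summability of norm integrals
  have hsum : Summable fun k : ℕ => ∫ s in Ioc (0:ℝ) t, ‖d k * s ^ (a * k + a - 1)‖ := by
    have heq : ∀ k : ℕ, |d k| * (t ^ (a * k + a) / (a * k + a))
        = t ^ a * ((c * t ^ a) ^ k / Real.Gamma (a * k + (a + 1))) := by
      intro k
      have hdk : |d k| = c ^ k / Real.Gamma (a * k + a) := by
        have hd : d k = (-c) ^ k / Real.Gamma (a * k + a) := rfl
        rw [hd, abs_div, abs_pow, abs_neg, abs_of_pos hc0, abs_of_pos (hΓpos k)]
      have hta : t ^ (a * k + a) = (t ^ a) ^ k * t ^ a := by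
        rw [← Real.rpow_natCast (t ^ a) k, ← Real.rpow_mul ht0.le, ← Real.rpow_add ht0]
      have hΓ1 : Real.Gamma (a * k + (a + 1)) = (a * k + a) * Real.Gamma (a * k + a) := by
        rw [show a * k + (a + 1) = (a * k + a) + 1 by ring,
          Real.Gamma_add_one (by positivity)]
      rw [hdk, hta, hΓ1, mul_pow]
      have h4 : (0:ℝ) < a * k + a := by positivity
      field_simp
    simp_rw [hnorm, heq]
    exact ((summable_ml a (a + 1) (c * t ^ a) ha (by linarith)).mul_left _)
  -- interchange sum and integral
  have hkey : (∫ s in (0:ℝ)..t, s ^ (a - 1) * mittagLeffler a a (-((s / ε) ^ a)))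
      = ∑' k : ℕ, d k * (t ^ (a * k + a) / (a * k + a)) := by
    rw [intervalIntegral.integral_of_le ht]
    rw [setIntegral_congr_fun measurableSet_Ioc hpt]
    rw [← MeasureTheory.integral_tsum_of_summable_integral_norm hInt hsum]
    apply tsum_congr
    intro k
    rw [integral_const_mul, hIoc]
  rw [hkey]
  -- final series manipulation
  set x : ℝ := -((t / ε) ^ a) with hxdef
  have hx : x = -(c * t ^ a) := by
    rw [hxdef, div_eq_mul_inv, Real.mul_rpow ht0.le (by positivity), Real.inv_rpow hε.le,
      hcdef, Real.rpow_neg hε.le]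
    ring
  have hterm : ∀ k : ℕ, c * (d k * (t ^ (a * k + a) / (a * k + a)))
      = -(x ^ (k + 1) / Real.Gamma (a * ((k : ℝ) + 1) + 1)) := by
    intro k
    have hta : t ^ (a * k + a) = (t ^ a) ^ (k + 1) := by
      rw [← Real.rpow_natCast (t ^ a) (k + 1), ← Real.rpow_mul ht0.le]
      push_cast; ring_nf
    have hΓ1 : Real.Gamma (a * ((k : ℝ) + 1) + 1) = (a * k + a) * Real.Gamma (a * k + a) := by
      rw [show a * ((k:ℝ) + 1) + 1 = (a * k + a) + 1 by ring,
        Real.Gamma_add_one (by positivity)]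
    have hxpow : x ^ (k + 1) = (-1:ℝ) ^ (k + 1) * (c ^ (k + 1) * (t ^ a) ^ (k + 1)) := by
      rw [hx, show -(c * t ^ a) = (-1) * (c * t ^ a) by ring, mul_pow, mul_pow]
    have h5 : (-1:ℝ) ^ (k + 1) = -((-1:ℝ) ^ k) := by rw [pow_succ]; ring
    have h6 : (-c:ℝ) ^ k = (-1) ^ k * c ^ k := by
      rw [show (-c:ℝ) = (-1) * c by ring, mul_pow]
    simp only [hddef]
    rw [hta, hΓ1, hxpow, h5, h6]
    have h4 : (0:ℝ) < a * k + a := by positivity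
    have h7 := (hΓpos k).ne'
    field_simp
    ring
  have h7 : ∑' k : ℕ, c * (d k * (t ^ (a * k + a) / (a * k + a)))
      = -∑' k : ℕ, x ^ (k + 1) / Real.Gamma (a * ((k : ℝ) + 1) + 1) := by
    rw [← tsum_neg]
    exact tsum_congr fun k => by rw [hterm k]
  have h8 : mittagLeffler a 1 x
      = 1 + ∑' k : ℕ, x ^ (k + 1) / Real.Gamma (a * ((k : ℝ) + 1) + 1) := by
    unfold mittagLeffler
    rw [Summable.tsum_eq_zero_add (summable_ml a 1 x ha one_pos)]
    congr 1
    · norm_num [Real.Gamma_one]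
    · exact tsum_congr fun k => by push_cast; ring_nf
  rw [← tsum_mul_left, h7, h8]
  ring
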